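/- Let p be an internal point, q0 an external point on the passant line p⊥, and ℓ0 a tangent line through q0. Every passant line ℓ' through p meets ℓ0 in an external point; let t(ℓ') denote the unique tangent line other than ℓ0 through this intersection point, and let T(p,ℓ0) = {t(ℓ') : ℓ' ∈ Pa_p}. Then, with characteristic vectors taken over F_2, χ_{N_{Pa,E}(p)} = Σ_{ℓ ∈ T(p,ℓ0)} χ_{E_ℓ}. -/

import Mathlib

/- Setting: `K` is a finite field of odd order `q`.  Points and lines of
`PG(2,q)` are both represented as points of the projectivization of `K^3`
(homogeneous coordinates), with incidence given by vanishing of the dot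
product.  `O` is the conic `X1^2 - X0*X2 = 0`. -/

open scoped Classical

noncomputable section

namespace ConicCode

variable (K : Type*) [Field K] [Fintype K]

abbrev Pt := Projectivization K (Fin 3 → K)

instance : Finite (Pt K) := Quotient.finite _

noncomputable instance : Fintype (Pt K) := Fintype.ofFinite _

variable {K}

/-- Dot product of two coordinate triples. -/
def dotV (v w : Fin 3 → K) : K := v 0 * w 0 + v 1 * w 1 + v 2 * w 2

/-- Incidence between a point and a line (both given by projective triples). -/
def Incid (p ℓ : Pt K) : Prop := dotV p.rep ℓ.rep = 0

/-- Membership in the conic `O` defined by `X1^2 - X0*X2`. -/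
def OnConic (p : Pt K) : Prop := p.rep 1 ^ 2 - p.rep 0 * p.rep 2 = 0

/-- A tangent line meets `O` in exactly one point. -/
def Tangent (ℓ : Pt K) : Prop := {p : Pt K | OnConic p ∧ Incid p ℓ}.ncard = 1

/-- A secant line meets `O` in exactly two points. -/
def Secant (ℓ : Pt K) : Prop := {p : Pt K | OnConic p ∧ Incid p ℓ}.ncard = 2

/-- A passant line misses `O`. -/
def Passant (ℓ : Pt K) : Prop := {p : Pt K | OnConic p ∧ Incid p ℓ}.ncard = 0

/-- An external point lies on exactly two tangent lines. -/
def External (p : Pt K) : Prop := {ℓ : Pt K | Tangent ℓ ∧ Incid p ℓ}.ncard = 2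

/-- An internal point lies on no tangent line. -/
def Internal (p : Pt K) : Prop := {ℓ : Pt K | Tangent ℓ ∧ Incid p ℓ}.ncard = 0


/-- Coordinates of the polar line of the point `(a0,a1,a2)`: `[-a2/2, a1, -a0/2]`. -/
def perpVec (v : Fin 3 → K) : Fin 3 → K := ![-(v 2) / 2, v 1, -(v 0) / 2]

/-- The polarity `⊥` induced by the conic `O`.  (In odd characteristic
`perpVec` of a nonzero vector is nonzero, so the `else` branch is never
taken.) -/
def perp (p : Pt K) : Pt K :=
  if h : perpVec p.rep ≠ 0 then Projectivization.mk K _ h else p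

/-- Cross product: coordinates of the line through two distinct points. -/
def crossVec (v w : Fin 3 → K) : Fin 3 → K :=
  ![v 1 * w 2 - v 2 * w 1, v 2 * w 0 - v 0 * w 2, v 0 * w 1 - v 1 * w 0]

/-- The line through two distinct points (junk value if the points coincide). -/
def lineThrough (p q : Pt K) : Pt K :=
  if h : crossVec p.rep q.rep ≠ 0 then Projectivization.mk K _ h else p

/-- The intersection point of two distinct lines (junk value if they coincide). -/
def meetPt (l m : Pt K) : Pt K := lineThrough l m

-- ===================== auxiliary development =====================
section Aux

open Projectivization


set_option linter.unusedSectionVars false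

lemma vec3_ext {f g : Fin 3 → K} (h0 : f 0 = g 0) (h1 : f 1 = g 1) (h2 : f 2 = g 2) :
    f = g := by
  funext i
  fin_cases i
  · exact h0
  · exact h1
  · exact h2

lemma vec_ne_zero_iff (v : Fin 3 → K) : v ≠ 0 ↔ v 0 ≠ 0 ∨ v 1 ≠ 0 ∨ v 2 ≠ 0 := by
  constructor
  · intro h
    by_contra hc
    push_neg at hc
    exact h (vec3_ext (by simp [hc.1]) (by simp [hc.2.1]) (by simp [hc.2.2]))
  · rintro (h | h | h) rfl <;> simp at h

lemma crossVec_apply0 (v w : Fin 3 → K) : crossVec v w 0 = v 1 * w 2 - v 2 * w 1 := rfl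
lemma crossVec_apply1 (v w : Fin 3 → K) : crossVec v w 1 = v 2 * w 0 - v 0 * w 2 := rfl
lemma crossVec_apply2 (v w : Fin 3 → K) : crossVec v w 2 = v 0 * w 1 - v 1 * w 0 := rfl

lemma dotV_comm (v w : Fin 3 → K) : dotV v w = dotV w v := by unfold dotV; ring

lemma dotV_smul_left (a : K) (v w : Fin 3 → K) : dotV (a • v) w = a * dotV v w := by
  simp only [dotV, Pi.smul_apply, smul_eq_mul]; ring

lemma dotV_smul_right (a : K) (v w : Fin 3 → K) : dotV v (a • w) = a * dotV v w := by
  simp only [dotV, Pi.smul_apply, smul_eq_mul]; ring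

lemma crossVec_smul_right (a : K) (v w : Fin 3 → K) :
    crossVec v (a • w) = a • crossVec v w := by
  refine vec3_ext ?_ ?_ ?_ <;>
    simp only [crossVec_apply0, crossVec_apply1, crossVec_apply2, Pi.smul_apply,
      smul_eq_mul, crossVec, Matrix.smul_cons, Matrix.cons_val_zero, Matrix.cons_val_one,
      Matrix.head_cons] <;> ring_nf <;>
    simp [crossVec_apply0, crossVec_apply1, crossVec_apply2] <;> ring

lemma dotV_crossVec_left (v w : Fin 3 → K) : dotV v (crossVec v w) = 0 := by
  simp only [dotV, crossVec_apply0, crossVec_apply1, crossVec_apply2]; ring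

lemma dotV_crossVec_right (v w : Fin 3 → K) : dotV w (crossVec v w) = 0 := by
  simp only [dotV, crossVec_apply0, crossVec_apply1, crossVec_apply2]; ring

/-- rep of mk is a unit multiple. -/
lemma rep_mk_eq {v : Fin 3 → K} (hv : v ≠ 0) :
    ∃ a : K, a ≠ 0 ∧ (Projectivization.mk K v hv).rep = a • v := by
  obtain ⟨a, ha⟩ := Projectivization.exists_smul_eq_mk_rep K v hv
  exact ⟨a, a.ne_zero, by rw [← ha, Units.smul_def]⟩

lemma mk_eq_mk_of_smul {v w : Fin 3 → K} (hv : v ≠ 0) (hw : w ≠ 0) {a : K}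
    (h : v = a • w) : Projectivization.mk K v hv = Projectivization.mk K w hw :=
  (Projectivization.mk_eq_mk_iff' K v w hv hw).2 ⟨a, h.symm⟩

lemma incid_mk_left {v : Fin 3 → K} (hv : v ≠ 0) (ℓ : Pt K) :
    Incid (Projectivization.mk K v hv) ℓ ↔ dotV v ℓ.rep = 0 := by
  obtain ⟨a, ha, hrep⟩ := rep_mk_eq hv
  unfold Incid
  rw [hrep, dotV_smul_left, mul_eq_zero]
  simp [ha]

lemma incid_mk_right {w : Fin 3 → K} (hw : w ≠ 0) (p : Pt K) :
    Incid p (Projectivization.mk K w hw) ↔ dotV p.rep w = 0 := by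
  obtain ⟨a, ha, hrep⟩ := rep_mk_eq hw
  unfold Incid
  rw [hrep, dotV_smul_right, mul_eq_zero]
  simp [ha]

lemma incid_mk_mk {v w : Fin 3 → K} (hv : v ≠ 0) (hw : w ≠ 0) :
    Incid (Projectivization.mk K v hv) (Projectivization.mk K w hw) ↔ dotV v w = 0 := by
  obtain ⟨a, ha, hrepa⟩ := rep_mk_eq hv
  obtain ⟨b, hb, hrepb⟩ := rep_mk_eq hw
  unfold Incid
  rw [hrepa, hrepb, dotV_smul_left, dotV_smul_right]
  simp [ha, hb, mul_eq_zero]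

lemma exists_smul_of_cross_eq_zero {v u : Fin 3 → K} (hu : u ≠ 0)
    (h : crossVec v u = 0) : ∃ c : K, v = c • u := by
  have h0 : v 1 * u 2 - v 2 * u 1 = 0 := by rw [← crossVec_apply0 v u, h]; rfl
  have h1 : v 2 * u 0 - v 0 * u 2 = 0 := by rw [← crossVec_apply1 v u, h]; rfl
  have h2 : v 0 * u 1 - v 1 * u 0 = 0 := by rw [← crossVec_apply2 v u, h]; rfl
  rcases (vec_ne_zero_iff u).1 hu with hu0 | hu1 | hu2
  · refine ⟨v 0 / u 0, vec3_ext ?_ ?_ ?_⟩ <;>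
      simp only [Pi.smul_apply, smul_eq_mul] <;> field_simp
    · linear_combination -h2
    · linear_combination h1
  · refine ⟨v 1 / u 1, vec3_ext ?_ ?_ ?_⟩ <;>
      simp only [Pi.smul_apply, smul_eq_mul] <;> field_simp
    · linear_combination h2
    · linear_combination -h0
  · refine ⟨v 2 / u 2, vec3_ext ?_ ?_ ?_⟩ <;>
      simp only [Pi.smul_apply, smul_eq_mul] <;> field_simp
    · linear_combination -h1
    · linear_combination h0

lemma cross_cross_eq_zero {v w1 w2 : Fin 3 → K} (h1 : dotV v w1 = 0) (h2 : dotV v w2 = 0) :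
    crossVec v (crossVec w1 w2) = 0 := by
  unfold dotV at h1 h2
  refine vec3_ext ?_ ?_ ?_ <;>
    simp only [crossVec_apply0, crossVec_apply1, crossVec_apply2, Pi.zero_apply]
  · linear_combination (w1 0) * h2 - (w2 0) * h1
  · linear_combination (w1 1) * h2 - (w2 1) * h1
  · linear_combination (w1 2) * h2 - (w2 2) * h1

lemma cross_rep_ne_zero {l m : Pt K} (h : l ≠ m) : crossVec l.rep m.rep ≠ 0 := by
  intro hc
  obtain ⟨c, hcs⟩ := exists_smul_of_cross_eq_zero m.rep_nonzero hc
  apply h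
  rw [← Projectivization.mk_rep l, ← Projectivization.mk_rep m]
  exact mk_eq_mk_of_smul _ _ hcs

/-- a point lying on two distinct lines is unique -/
lemma point_unique {x y l m : Pt K} (hlm : l ≠ m)
    (hxl : Incid x l) (hxm : Incid x m) (hyl : Incid y l) (hym : Incid y m) : x = y := by
  have hz := cross_rep_ne_zero hlm
  obtain ⟨c, hc⟩ := exists_smul_of_cross_eq_zero hz (cross_cross_eq_zero hxl hxm)
  obtain ⟨d, hd⟩ := exists_smul_of_cross_eq_zero hz (cross_cross_eq_zero hyl hym)
  rw [← Projectivization.mk_rep x, ← Projectivization.mk_rep y]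
  have := mk_eq_mk_of_smul x.rep_nonzero hz hc
  rw [this, mk_eq_mk_of_smul y.rep_nonzero hz hd]

lemma incid_symm {x y : Pt K} (h : Incid x y) : Incid y x := by
  unfold Incid at *; rw [dotV_comm]; exact h

lemma lineThrough_eq {x y : Pt K} (h : x ≠ y) :
    lineThrough x y = Projectivization.mk K (crossVec x.rep y.rep) (cross_rep_ne_zero h) := by
  unfold lineThrough
  rw [dif_pos (cross_rep_ne_zero h)]

lemma incid_lineThrough_left {x y : Pt K} (h : x ≠ y) : Incid x (lineThrough x y) := by
  rw [lineThrough_eq h, incid_mk_right]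
  exact dotV_crossVec_left _ _

lemma incid_lineThrough_right {x y : Pt K} (h : x ≠ y) : Incid y (lineThrough x y) := by
  rw [lineThrough_eq h, incid_mk_right]
  exact dotV_crossVec_right _ _

/-- the line through two distinct points is unique -/
lemma line_unique {x y ℓ : Pt K} (h : x ≠ y) (hx : Incid x ℓ) (hy : Incid y ℓ) :
    ℓ = lineThrough x y :=
  point_unique h (incid_symm hx) (incid_symm hy)
    (incid_symm (incid_lineThrough_left h)) (incid_symm (incid_lineThrough_right h))

-- chunk 2: rootSet machinery
/-- roots in `Option K` of `a s² + b s + c`, where `none` (the point at infinity)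
counts as a root iff `a = 0`. -/
def rootSet (a b c : K) : Set (Option K) :=
  {x : Option K | x.elim (a = 0) (fun s => a * s ^ 2 + b * s + c = 0)}

variable {a b c : K}

lemma mem_rootSet_some {s : K} : some s ∈ rootSet a b c ↔ a * s ^ 2 + b * s + c = 0 :=
  Iff.rfl

lemma mem_rootSet_none : (none : Option K) ∈ rootSet a b c ↔ a = 0 := Iff.rfl

lemma rootSet_classify (h2 : (2:K) ≠ 0) (habc : ¬(a = 0 ∧ b = 0 ∧ c = 0)) :
    (¬IsSquare (b ^ 2 - 4 * a * c) ∧ (rootSet a b c).ncard = 0) ∨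
    (b ^ 2 - 4 * a * c = 0 ∧ (rootSet a b c).ncard = 1) ∨
    (b ^ 2 - 4 * a * c ≠ 0 ∧ IsSquare (b ^ 2 - 4 * a * c) ∧ (rootSet a b c).ncard = 2) := by
  by_cases ha : a = 0
  · subst ha
    by_cases hb : b = 0
    · subst hb
      have hc : c ≠ 0 := by tauto
      right; left
      refine ⟨by ring, ?_⟩
      have hset : rootSet 0 0 c = {none} := by
        ext x
        cases x with
        | none => simp [mem_rootSet_none]
        | some s =>
          simp only [mem_rootSet_some, Set.mem_singleton_iff, reduceCtorEq, iff_false]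
          intro h
          exact hc (by linear_combination h)
      rw [hset, Set.ncard_singleton]
    · right; right
      refine ⟨by simpa using pow_ne_zero 2 hb, ⟨b, by ring⟩, ?_⟩
      have hset : rootSet 0 b c = {some (-c / b), none} := by
        ext x
        cases x with
        | none => simp [mem_rootSet_none]
        | some s =>
          simp only [mem_rootSet_some, Set.mem_insert_iff, Set.mem_singleton_iff,
            Option.some.injEq, reduceCtorEq, or_false]
          have hs : s = -c / b ↔ s * b = -c := by
            rw [eq_div_iff hb]
          constructor
          · intro h; rw [hs]; linear_combination h
          · intro h; rw [hs] at h; linear_combination h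
      rw [hset, Set.ncard_pair (by simp)]
  · by_cases hsq : IsSquare (b ^ 2 - 4 * a * c)
    · obtain ⟨r, hr⟩ := hsq
      have h2a : 2 * a ≠ 0 := mul_ne_zero h2 ha
      by_cases hr0 : r = 0
      · subst hr0
        have hd : b ^ 2 - 4 * a * c = 0 := by rw [hr]; ring
        right; left
        refine ⟨hd, ?_⟩
        have hset : rootSet a b c = {some (-b / (2 * a))} := by
          ext x
          cases x with
          | none => simpa [mem_rootSet_none] using ha
          | some s =>
            simp only [mem_rootSet_some, Set.mem_singleton_iff, Option.some.injEq]
            have hs : s = -b / (2 * a) ↔ 2 * a * s = -b := by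
              rw [eq_div_iff h2a]; constructor <;> intro h <;> linear_combination h
            constructor
            · intro h
              have hsqz : (2 * a * s + b) ^ 2 = 0 := by linear_combination 4 * a * h + hd
              have hz : 2 * a * s + b = 0 := by
                exact pow_eq_zero_iff (two_ne_zero) |>.1 hsqz
              rw [hs]; linear_combination hz
            · intro h
              rw [hs] at h
              have h4 : (a * s ^ 2 + b * s + c) * (4 * a) = 0 := by
                linear_combination (2 * a * s + b) * h - hd
              rcases mul_eq_zero.1 h4 with h' | h'
              · exact h'
              · exact absurd (by linear_combination a * h') (mul_ne_zero h2a h2a)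
        rw [hset, Set.ncard_singleton]
      · right; right
        refine ⟨by rw [hr]; exact mul_ne_zero hr0 hr0, ⟨r, hr⟩, ?_⟩
        have key : ∀ s : K, a * s ^ 2 + b * s + c = 0 ↔
            (s = (-b + r) / (2 * a) ∨ s = (-b - r) / (2 * a)) := by
          intro s
          have hs1 : s = (-b + r) / (2 * a) ↔ 2 * a * s = -b + r := by
            rw [eq_div_iff h2a]; constructor <;> intro h <;> linear_combination h
          have hs2 : s = (-b - r) / (2 * a) ↔ 2 * a * s = -b - r := by
            rw [eq_div_iff h2a]; constructor <;> intro h <;> linear_combination h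
          rw [hs1, hs2]
          constructor
          · intro h
            have hfac : (2 * a * s - (-b + r)) * (2 * a * s - (-b - r)) = 0 := by
              linear_combination 4 * a * h + hr
            rcases mul_eq_zero.1 hfac with h' | h'
            · left; linear_combination h'
            · right; linear_combination h'
          · rintro (h | h)
            · have h4 : (a * s ^ 2 + b * s + c) * (4 * a) = 0 := by
                linear_combination (2 * a * s + b + r) * h - hr
              rcases mul_eq_zero.1 h4 with h' | h'
              · exact h'
              · exact absurd (by linear_combination a * h') (mul_ne_zero h2a h2a)
            · have h4 : (a * s ^ 2 + b * s + c) * (4 * a) = 0 := by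
                linear_combination (2 * a * s + b - r) * h - hr
              rcases mul_eq_zero.1 h4 with h' | h'
              · exact h'
              · exact absurd (by linear_combination a * h') (mul_ne_zero h2a h2a)
        have hset : rootSet a b c = {some ((-b + r) / (2 * a)), some ((-b - r) / (2 * a))} := by
          ext x
          cases x with
          | none => simpa [mem_rootSet_none] using ha
          | some s =>
            simp only [mem_rootSet_some, Set.mem_insert_iff, Set.mem_singleton_iff,
              Option.some.injEq]
            exact key s
        rw [hset, Set.ncard_pair]
        simp only [ne_eq, Option.some.injEq]
        intro hEq
        rw [div_eq_div_iff h2a h2a] at hEq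
        have : r * (4 * a) = 0 := by linear_combination hEq
        rcases mul_eq_zero.1 this with h' | h'
        · exact hr0 h'
        · exact absurd (show 2*a*(2*a) = 0 by linear_combination a * h') (mul_ne_zero h2a h2a)
    · left
      refine ⟨hsq, ?_⟩
      have hset : rootSet a b c = ∅ := by
        ext x
        cases x with
        | none => simpa [mem_rootSet_none] using ha
        | some s =>
          simp only [mem_rootSet_some, Set.mem_empty_iff_false, iff_false]
          intro h
          exact hsq ⟨2 * a * s + b, by linear_combination -4 * a * h⟩
      rw [hset]
      simp
-- chunk 3: parametrizations and classification

/-- tangent line coordinate vectors: tangent at `(1,s,s²)` is `[s²,-2s,1]`,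
tangent at `(0,0,1)` is `[1,0,0]`. -/
def tvec : Option K → Fin 3 → K
  | some s => ![s ^ 2, -2 * s, 1]
  | none => ![1, 0, 0]

lemma tvec_ne_zero (σ : Option K) : (tvec σ : Fin 3 → K) ≠ 0 := by
  cases σ <;> (rw [vec_ne_zero_iff]; simp [tvec])

def tl (σ : Option K) : Pt K := Projectivization.mk K (tvec σ) (tvec_ne_zero σ)

/-- value of the tangent-line functional at vector `v`. -/
def Gf (v : Fin 3 → K) (σ : Option K) : K := dotV v (tvec σ)

lemma Gf_some (v : Fin 3 → K) (s : K) :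
    Gf v (some s) = v 0 * s ^ 2 - 2 * v 1 * s + v 2 := by
  simp [Gf, dotV, tvec]; ring

lemma Gf_none (v : Fin 3 → K) : Gf v none = v 0 := by simp [Gf, dotV, tvec]

lemma incid_tl_iff {x : Pt K} {σ : Option K} : Incid x (tl σ) ↔ Gf x.rep σ = 0 :=
  incid_mk_right (tvec_ne_zero σ) x

def ldisc (w : Fin 3 → K) : K := w 1 ^ 2 - 4 * w 2 * w 0

lemma ldisc_smul (a : K) (w : Fin 3 → K) : ldisc (a • w) = a ^ 2 * ldisc w := by
  simp only [ldisc, Pi.smul_apply, smul_eq_mul]; ring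

lemma isSquare_sq_mul {u x : K} (hu : u ≠ 0) : IsSquare (u ^ 2 * x) ↔ IsSquare x := by
  constructor
  · rintro ⟨r, hr⟩
    exact ⟨r / u, by field_simp at hr ⊢; linear_combination hr⟩
  · rintro ⟨r, rfl⟩
    exact ⟨u * r, by ring⟩

def Qf (v : Fin 3 → K) : K := v 1 ^ 2 - v 0 * v 2

lemma onConic_iff_Qf {x : Pt K} : OnConic x ↔ Qf x.rep = 0 := Iff.rfl

lemma Qf_smul (a : K) (v : Fin 3 → K) : Qf (a • v) = a ^ 2 * Qf v := by
  simp only [Qf, Pi.smul_apply, smul_eq_mul]; ring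

def cvec : Option K → Fin 3 → K
  | some s => ![1, s, s ^ 2]
  | none => ![0, 0, 1]

lemma cvec_ne_zero (σ : Option K) : (cvec σ : Fin 3 → K) ≠ 0 := by
  cases σ <;> (rw [vec_ne_zero_iff]; simp [cvec])

def cpt (σ : Option K) : Pt K := Projectivization.mk K (cvec σ) (cvec_ne_zero σ)

lemma onConic_mk {v : Fin 3 → K} (hv : v ≠ 0) :
    OnConic (Projectivization.mk K v hv) ↔ Qf v = 0 := by
  obtain ⟨a, ha, hrep⟩ := rep_mk_eq hv
  rw [onConic_iff_Qf, hrep, Qf_smul, mul_eq_zero]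
  simp [pow_eq_zero_iff, ha]

lemma onConic_cpt (σ : Option K) : OnConic (cpt σ) := by
  rw [cpt, onConic_mk]
  cases σ <;> simp [cvec, Qf]

lemma onConic_iff_exists {x : Pt K} : OnConic x ↔ ∃ σ, x = cpt σ := by
  constructor
  · intro h
    rw [onConic_iff_Qf] at h
    set v := x.rep with hv
    by_cases h0 : v 0 = 0
    · refine ⟨none, ?_⟩
      have h1 : v 1 = 0 := by
        have : v 1 ^ 2 = 0 := by rw [Qf] at h; linear_combination h + v 2 * h0
        exact pow_eq_zero_iff two_ne_zero |>.1 this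
      have h2' : v 2 ≠ 0 := by
        intro h2'
        exact x.rep_nonzero (vec3_ext (by simpa using h0) (by simpa using h1)
          (by simpa using h2'))
      rw [← Projectivization.mk_rep x]
      exact mk_eq_mk_of_smul _ _ (show v = v 2 • cvec none from
        vec3_ext (by simp [cvec, h0]) (by simp [cvec, h1]) (by simp [cvec]))
    · refine ⟨some (v 1 / v 0), ?_⟩
      rw [← Projectivization.mk_rep x]
      refine mk_eq_mk_of_smul _ _ (show v = v 0 • cvec (some (v 1 / v 0)) from
        vec3_ext (by simp [cvec]) (by simp [cvec]; field_simp) ?_)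
      simp only [cvec, Pi.smul_apply, smul_eq_mul, Matrix.cons_val_two, Matrix.tail_cons,
        Matrix.head_cons]
      rw [Qf] at h
      field_simp
      linear_combination -h
  · rintro ⟨σ, rfl⟩
    exact onConic_cpt σ

lemma cpt_injective : Function.Injective (cpt : Option K → Pt K) := by
  intro σ τ h
  rw [cpt, cpt, Projectivization.mk_eq_mk_iff'] at h
  obtain ⟨a, ha⟩ := h
  cases σ with
  | none => cases τ with
    | none => rfl
    | some t =>
      exfalso
      have := congrFun ha 0
      simp [cvec] at this
      subst this
      have := congrFun ha 2
      simp [cvec] at this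
  | some s => cases τ with
    | none =>
      exfalso
      have := congrFun ha 0
      simp [cvec] at this
    | some t =>
      have h0 := congrFun ha 0
      simp [cvec] at h0
      subst h0
      have h1 := congrFun ha 1
      simp [cvec] at h1
      rw [h1]

lemma tl_injective (h2 : (2:K) ≠ 0) : Function.Injective (tl : Option K → Pt K) := by
  intro σ τ h
  rw [tl, tl, Projectivization.mk_eq_mk_iff'] at h
  obtain ⟨a, ha⟩ := h
  cases σ with
  | none => cases τ with
    | none => rfl
    | some t =>
      exfalso
      have h2' := congrFun ha 2
      simp [tvec] at h2'
      subst h2'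
      have := congrFun ha 0
      simp [tvec] at this
  | some s => cases τ with
    | none =>
      exfalso
      have h2' := congrFun ha 2
      simp [tvec] at h2'
    | some t =>
      have hc2 := congrFun ha 2
      simp [tvec] at hc2
      subst hc2
      have h1 := congrFun ha 1
      simp [tvec] at h1
      rcases h1 with h1 | h1
      · exact congrArg some h1.symm
      · exact absurd h1 h2

lemma mem_rootSet_iff_Gf {v : Fin 3 → K} {σ : Option K} :
    σ ∈ rootSet (v 0) (-2 * v 1) (v 2) ↔ Gf v σ = 0 := by
  cases σ with
  | none => rw [mem_rootSet_none, Gf_none]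
  | some s =>
    rw [mem_rootSet_some, Gf_some]
    constructor <;> intro h <;> linear_combination h

lemma incid_cpt_iff {ℓ : Pt K} {σ : Option K} :
    Incid (cpt σ) ℓ ↔ σ ∈ rootSet (ℓ.rep 2) (ℓ.rep 1) (ℓ.rep 0) := by
  rw [cpt, incid_mk_left]
  cases σ with
  | none => simp [dotV, cvec, mem_rootSet_none]
  | some s =>
    rw [mem_rootSet_some]
    simp only [dotV, cvec, Matrix.cons_val_zero, Matrix.cons_val_one, Matrix.head_cons,
      Matrix.cons_val_two, Matrix.tail_cons]
    constructor <;> intro h <;> linear_combination h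

lemma conic_inter_line (ℓ : Pt K) :
    {p : Pt K | OnConic p ∧ Incid p ℓ} = cpt '' rootSet (ℓ.rep 2) (ℓ.rep 1) (ℓ.rep 0) := by
  ext p
  constructor
  · rintro ⟨h1, hi⟩
    obtain ⟨σ, rfl⟩ := onConic_iff_exists.1 h1
    exact ⟨σ, incid_cpt_iff.1 hi, rfl⟩
  · rintro ⟨σ, hσ, rfl⟩
    exact ⟨onConic_cpt σ, incid_cpt_iff.2 hσ⟩

lemma line_rep_not_all_zero (ℓ : Pt K) : ¬(ℓ.rep 2 = 0 ∧ ℓ.rep 1 = 0 ∧ ℓ.rep 0 = 0) := by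
  rintro ⟨h2', h1, h0⟩
  exact ℓ.rep_nonzero (vec3_ext (by simpa using h0) (by simpa using h1) (by simpa using h2'))

lemma point_rep_not_all_zero (h2 : (2:K) ≠ 0) (x : Pt K) :
    ¬(x.rep 0 = 0 ∧ -2 * x.rep 1 = 0 ∧ x.rep 2 = 0) := by
  rintro ⟨h0, h1, h2'⟩
  have hx1 : x.rep 1 = 0 := by
    rcases mul_eq_zero.1 h1 with h | h
    · exact absurd (by linear_combination -h) h2
    · exact h
  exact x.rep_nonzero (vec3_ext (by simpa using h0) (by simpa using hx1) (by simpa using h2'))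

lemma ldisc_eq (w : Fin 3 → K) : w 1 ^ 2 - 4 * w 2 * w 0 = ldisc w := rfl

lemma tangent_iff_ldisc (h2 : (2:K) ≠ 0) (ℓ : Pt K) : Tangent ℓ ↔ ldisc ℓ.rep = 0 := by
  unfold Tangent
  rw [conic_inter_line, Set.ncard_image_of_injective _ cpt_injective]
  rcases rootSet_classify h2 (line_rep_not_all_zero ℓ) with ⟨h, hn⟩ | ⟨h, hn⟩ | ⟨h, _, hn⟩ <;>
    rw [hn] <;> rw [ldisc_eq] at h
  · constructor
    · intro h'; exact absurd h' (by norm_num)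
    · intro h'; exact absurd (show IsSquare (ldisc ℓ.rep) by rw [h']; exact IsSquare.zero) h
  · simp [h]
  · constructor
    · intro h'; exact absurd h' (by norm_num)
    · intro h'; exact absurd h' h

lemma passant_iff_ldisc (h2 : (2:K) ≠ 0) (ℓ : Pt K) :
    Passant ℓ ↔ ¬IsSquare (ldisc ℓ.rep) := by
  unfold Passant
  rw [conic_inter_line, Set.ncard_image_of_injective _ cpt_injective]
  rcases rootSet_classify h2 (line_rep_not_all_zero ℓ) with ⟨h, hn⟩ | ⟨h, hn⟩ | ⟨h, hsq, hn⟩ <;>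
    rw [hn] <;> rw [ldisc_eq] at h
  · simp [h]
  · constructor
    · intro h'; exact absurd h' (by norm_num)
    · intro h'
      exact absurd (show IsSquare (ldisc ℓ.rep) by rw [h]; exact IsSquare.zero) h'
  · rw [ldisc_eq] at hsq
    constructor
    · intro h'; exact absurd h' (by norm_num)
    · intro h'; exact absurd hsq h'

lemma tangent_mk (h2 : (2:K) ≠ 0) {w : Fin 3 → K} (hw : w ≠ 0) :
    Tangent (Projectivization.mk K w hw) ↔ ldisc w = 0 := by
  rw [tangent_iff_ldisc h2]
  obtain ⟨a, ha, hrep⟩ := rep_mk_eq hw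
  rw [hrep, ldisc_smul, mul_eq_zero]
  simp [pow_eq_zero_iff, ha]

lemma passant_mk (h2 : (2:K) ≠ 0) {w : Fin 3 → K} (hw : w ≠ 0) :
    Passant (Projectivization.mk K w hw) ↔ ¬IsSquare (ldisc w) := by
  rw [passant_iff_ldisc h2]
  obtain ⟨a, ha, hrep⟩ := rep_mk_eq hw
  rw [hrep, ldisc_smul, isSquare_sq_mul ha]

lemma tangent_tl (h2 : (2:K) ≠ 0) (σ : Option K) : Tangent (tl σ) := by
  rw [tl, tangent_mk h2]
  cases σ <;> simp [tvec, ldisc] <;> ring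

lemma tangent_iff_tl (h2 : (2:K) ≠ 0) {ℓ : Pt K} : Tangent ℓ ↔ ∃ σ, ℓ = tl σ := by
  constructor
  · intro ht
    have h := (tangent_iff_ldisc h2 ℓ).1 ht
    set w := ℓ.rep with hw
    by_cases hw2 : w 2 = 0
    · refine ⟨none, ?_⟩
      have h1 : w 1 = 0 := by
        have : w 1 ^ 2 = 0 := by rw [ldisc] at h; linear_combination h + 4 * w 0 * hw2
        exact pow_eq_zero_iff two_ne_zero |>.1 this
      rw [← Projectivization.mk_rep ℓ]
      exact mk_eq_mk_of_smul _ _ (show w = w 0 • tvec none from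
        vec3_ext (by simp [tvec]) (by simp [tvec, h1]) (by simp [tvec, hw2]))
    · refine ⟨some (-(w 1) / (2 * w 2)), ?_⟩
      rw [← Projectivization.mk_rep ℓ]
      have h2w : 2 * w 2 ≠ 0 := mul_ne_zero h2 hw2
      refine mk_eq_mk_of_smul _ _ (show w = w 2 • tvec (some (-(w 1) / (2 * w 2))) from
        vec3_ext ?_ ?_ (by simp [tvec]))
      · simp only [tvec, Pi.smul_apply, smul_eq_mul, Matrix.cons_val_zero]
        rw [div_pow]
        rw [ldisc] at h
        field_simp
        linear_combination -h
      · simp only [tvec, Pi.smul_apply, smul_eq_mul, Matrix.cons_val_one, Matrix.head_cons,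
          Matrix.cons_val_zero]
        field_simp
  · rintro ⟨σ, rfl⟩
    exact tangent_tl h2 σ

lemma tangentsThrough_eq (h2 : (2:K) ≠ 0) (x : Pt K) :
    {ℓ : Pt K | Tangent ℓ ∧ Incid x ℓ} =
      tl '' rootSet (x.rep 0) (-2 * x.rep 1) (x.rep 2) := by
  ext ℓ
  constructor
  · rintro ⟨ht, hi⟩
    obtain ⟨σ, rfl⟩ := (tangent_iff_tl h2).1 ht
    exact ⟨σ, mem_rootSet_iff_Gf.2 (incid_tl_iff.1 hi), rfl⟩
  · rintro ⟨σ, hσ, rfl⟩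
    exact ⟨tangent_tl h2 σ, incid_tl_iff.2 (mem_rootSet_iff_Gf.1 hσ)⟩

lemma internal_iff_Gf (h2 : (2:K) ≠ 0) (x : Pt K) :
    Internal x ↔ ∀ σ, Gf x.rep σ ≠ 0 := by
  unfold Internal
  rw [tangentsThrough_eq h2, Set.ncard_image_of_injective _ (tl_injective h2),
    Set.ncard_eq_zero (Set.toFinite _), Set.eq_empty_iff_forall_notMem]
  constructor
  · intro h σ hσ
    exact h σ (mem_rootSet_iff_Gf.2 hσ)
  · intro h σ hσ
    exact h σ (mem_rootSet_iff_Gf.1 hσ)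

lemma external_parts (h2 : (2:K) ≠ 0) {x : Pt K} (hx : External x) :
    ∃ σ τ, σ ≠ τ ∧ ∀ υ, Gf x.rep υ = 0 ↔ (υ = σ ∨ υ = τ) := by
  unfold External at hx
  rw [tangentsThrough_eq h2, Set.ncard_image_of_injective _ (tl_injective h2),
    Set.ncard_eq_two] at hx
  obtain ⟨σ, τ, hst, hset⟩ := hx
  refine ⟨σ, τ, hst, fun υ => ?_⟩
  rw [← mem_rootSet_iff_Gf, hset]
  simp

lemma external_of (h2 : (2:K) ≠ 0) {x : Pt K} (hx : ¬ OnConic x) {σ : Option K}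
    (hσ : Gf x.rep σ = 0) : External x := by
  unfold External
  rw [tangentsThrough_eq h2, Set.ncard_image_of_injective _ (tl_injective h2)]
  rcases rootSet_classify h2 (point_rep_not_all_zero h2 x) with ⟨h, hn⟩ | ⟨h, hn⟩ | ⟨_, _, hn⟩
  · exfalso
    rw [Set.ncard_eq_zero (Set.toFinite _)] at hn
    exact (hn ▸ mem_rootSet_iff_Gf.2 hσ : σ ∈ (∅ : Set (Option K)))
  · exfalso
    apply hx
    rw [onConic_iff_Qf]
    have h4 : (2:K) * 2 ≠ 0 := mul_ne_zero h2 h2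
    have : Qf x.rep * (2 * 2) = 0 := by rw [Qf]; linear_combination h
    rcases mul_eq_zero.1 this with h' | h'
    · exact h'
    · exact absurd h' h4
  · exact hn
-- chunk 4: intersection points of tangent lines, key identity, parity

/-- coordinates of the intersection point of the tangents at `σ` and `τ`. -/
def xvec : Option K → Option K → Fin 3 → K
  | some s, some t => ![2, s + t, 2 * s * t]
  | some s, none => ![0, 1, 2 * s]
  | none, some t => ![0, 1, 2 * t]
  | none, none => ![1, 0, 0]

lemma xvec_ne_zero (h2 : (2:K) ≠ 0) (σ τ : Option K) : xvec σ τ ≠ 0 := by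
  cases σ <;> cases τ <;> (rw [vec_ne_zero_iff]; simp [xvec, h2])

def xpt (h2 : (2:K) ≠ 0) (σ τ : Option K) : Pt K :=
  Projectivization.mk K (xvec σ τ) (xvec_ne_zero h2 σ τ)

lemma dot_xvec_tvec_left {σ τ : Option K} (h : σ ≠ τ) :
    dotV (xvec σ τ) (tvec σ) = 0 := by
  cases σ with
  | none => cases τ with
    | none => exact absurd rfl h
    | some t => simp [dotV, xvec, tvec]; try ring
  | some s => cases τ with
    | none => simp [dotV, xvec, tvec]; try ring
    | some t => simp [dotV, xvec, tvec]; try ring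

lemma dot_xvec_tvec_right {σ τ : Option K} (h : σ ≠ τ) :
    dotV (xvec σ τ) (tvec τ) = 0 := by
  cases σ with
  | none => cases τ with
    | none => exact absurd rfl h
    | some t => simp [dotV, xvec, tvec]; try ring
  | some s => cases τ with
    | none => simp [dotV, xvec, tvec]; try ring
    | some t => simp [dotV, xvec, tvec]; try ring

lemma incid_xpt_left (h2 : (2:K) ≠ 0) {σ τ : Option K} (h : σ ≠ τ) :
    Incid (xpt h2 σ τ) (tl σ) :=
  (incid_mk_mk _ _).2 (dot_xvec_tvec_left h)

lemma incid_xpt_right (h2 : (2:K) ≠ 0) {σ τ : Option K} (h : σ ≠ τ) :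
    Incid (xpt h2 σ τ) (tl τ) :=
  (incid_mk_mk _ _).2 (dot_xvec_tvec_right h)

/-- key identity: discriminant of the line joining `v` to the meet of tangents
at `σ`, `τ` equals `4 Gf(v,σ) Gf(v,τ)`. -/
lemma ldisc_cross_xvec (v : Fin 3 → K) {σ τ : Option K} (h : σ ≠ τ) :
    ldisc (crossVec v (xvec σ τ)) = 4 * (Gf v σ * Gf v τ) := by
  cases σ with
  | none => cases τ with
    | none => exact absurd rfl h
    | some t =>
      simp only [ldisc, crossVec_apply0, crossVec_apply1, crossVec_apply2, xvec,
        Gf_none, Gf_some, Matrix.cons_val_zero, Matrix.cons_val_one, Matrix.head_cons,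
        Matrix.cons_val_two, Matrix.tail_cons]
      ring
  | some s => cases τ with
    | none =>
      simp only [ldisc, crossVec_apply0, crossVec_apply1, crossVec_apply2, xvec,
        Gf_none, Gf_some, Matrix.cons_val_zero, Matrix.cons_val_one, Matrix.head_cons,
        Matrix.cons_val_two, Matrix.tail_cons]
      ring
    | some t =>
      simp only [ldisc, crossVec_apply0, crossVec_apply1, crossVec_apply2, xvec,
        Gf_some, Matrix.cons_val_zero, Matrix.cons_val_one, Matrix.head_cons,
        Matrix.cons_val_two, Matrix.tail_cons]
      ring

lemma isSquare_four_mul (h2 : (2:K) ≠ 0) (x : K) : IsSquare (4 * x) ↔ IsSquare x := by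
  have : (4:K) = 2 ^ 2 := by norm_num
  rw [this, isSquare_sq_mul h2]

/-- parity of quadratic characters: the heart of the mod-2 count. -/
lemma parity_key {x y z : K} (hx : x ≠ 0) (hy : y ≠ 0) (hz : z ≠ 0) :
    (if ¬IsSquare (x * y) then (1 : ZMod 2) else 0) =
      (if ¬IsSquare (x * z) then (1 : ZMod 2) else 0) +
        (if ¬IsSquare (y * z) then (1 : ZMod 2) else 0) := by
  have key : ∀ u w : K, u ≠ 0 → w ≠ 0 →
      ((¬IsSquare (u * w)) ↔ (quadraticChar K u) * (quadraticChar K w) = -1) := by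
    intro u w hu hw
    rw [← quadraticChar_neg_one_iff_not_isSquare, map_mul]
  rcases quadraticChar_dichotomy hx with h1 | h1 <;>
    rcases quadraticChar_dichotomy hy with h2' | h2' <;>
      rcases quadraticChar_dichotomy hz with h3 | h3 <;>
        simp [key _ _ hx hy, key _ _ hx hz, key _ _ hy hz, h1, h2', h3] <;> decide

lemma incid_meetPt_left {l m : Pt K} (h : l ≠ m) : Incid (meetPt l m) l :=
  incid_symm (incid_lineThrough_left h)

lemma incid_meetPt_right {l m : Pt K} (h : l ≠ m) : Incid (meetPt l m) m :=
  incid_symm (incid_lineThrough_right h)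

lemma passant_ne_tangent {l t : Pt K} (hl : Passant l) (ht : Tangent t) : l ≠ t := by
  intro heq
  subst heq
  unfold Passant at hl
  unfold Tangent at ht
  rw [hl] at ht
  exact absurd ht (by norm_num)

end Aux

/-- with `p` internal, `q0` an external point on the passant line
`p⊥`, and `ℓ0` a tangent through `q0`: every passant line through `p` meets
`ℓ0` in an external point, and over `F_2` the characteristic vector of
`N_{Pa,E}(p)` equals the sum, over the tangent lines `t ≠ ℓ0` through the
points `ℓ' ∩ ℓ0` for `ℓ'` a passant line through `p`, of the characteristic
vectors of `E_t`. -/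
theorem chi_NPaE_eq_sum_tangents
    (K : Type*) [Field K] [Fintype K] (hodd : Odd (Fintype.card K))
    (p q0 l0 : Pt K) (hp : Internal p) (hq0 : External q0)
    (hq0perp : Incid q0 (perp p)) (hl0 : Tangent l0) (hq0l : Incid q0 l0) :
    (∀ l', Passant l' → Incid p l' → External (meetPt l' l0)) ∧
    (∀ e : Pt K, External e →
      (if ∃ l', Passant l' ∧ Incid p l' ∧ Incid e l' then (1 : ZMod 2) else 0) =
        ∑ t : Pt K,
          if (Tangent t ∧ t ≠ l0 ∧
                ∃ l', Passant l' ∧ Incid p l' ∧ Incid (meetPt l' l0) t) ∧ Incid e t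
          then (1 : ZMod 2) else 0) := by
  classical
  have h2 : (2:K) ≠ 0 := by
    refine Ring.two_ne_zero ?_
    intro hc
    have := FiniteField.even_card_iff_char_two.1 hc
    rw [Nat.odd_iff] at hodd
    omega
  have hpG : ∀ σ, Gf p.rep σ ≠ 0 := (internal_iff_Gf h2 p).1 hp
  obtain ⟨υ, rfl⟩ := (tangent_iff_tl h2).1 hl0
  -- part (a)
  have parta : ∀ l', Passant l' → Incid p l' → External (meetPt l' (tl υ)) := by
    intro l' hl' hpl'
    have hne : l' ≠ tl υ := passant_ne_tangent hl' (tangent_tl h2 υ)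
    have hm1 : Incid (meetPt l' (tl υ)) l' := incid_meetPt_left hne
    have hm2 : Incid (meetPt l' (tl υ)) (tl υ) := incid_meetPt_right hne
    have hnotconic : ¬ OnConic (meetPt l' (tl υ)) := by
      intro hc
      have hmem : (meetPt l' (tl υ)) ∈ {q : Pt K | OnConic q ∧ Incid q l'} := ⟨hc, hm1⟩
      rw [Passant, Set.ncard_eq_zero (Set.toFinite _)] at hl'
      rw [hl'] at hmem
      exact hmem
    exact external_of h2 hnotconic (incid_tl_iff.1 hm2)
  refine ⟨parta, ?_⟩
  intro e he
  obtain ⟨σ, τ, hστ, hGe⟩ := external_parts h2 he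
  have htlστ : tl σ ≠ tl τ := fun h => hστ (tl_injective h2 h)
  have heσ : Incid e (tl σ) := incid_tl_iff.2 ((hGe σ).2 (Or.inl rfl))
  have heτ : Incid e (tl τ) := incid_tl_iff.2 ((hGe τ).2 (Or.inr rfl))
  have hex : e = xpt h2 σ τ :=
    point_unique htlστ heσ heτ (incid_xpt_left h2 hστ) (incid_xpt_right h2 hστ)
  have hpe : p ≠ e := fun h => hpG σ (incid_tl_iff.1 (h ▸ heσ))
  have hpx : ∀ {α β : Option K}, α ≠ β → p ≠ xpt h2 α β := by
    intro α β hab h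
    exact hpG α (incid_tl_iff.1 (h ▸ incid_xpt_left h2 hab))
  have hline : ∀ {α β : Option K} (hab : α ≠ β),
      (Passant (lineThrough p (xpt h2 α β)) ↔ ¬ IsSquare (Gf p.rep α * Gf p.rep β)) := by
    intro α β hab
    rw [lineThrough_eq (hpx hab), passant_mk h2]
    obtain ⟨a, ha, hrep⟩ := rep_mk_eq (xvec_ne_zero h2 α β)
    have hrep' : (xpt h2 α β).rep = a • xvec α β := hrep
    rw [hrep', crossVec_smul_right, ldisc_smul, isSquare_sq_mul ha,
      ldisc_cross_xvec p.rep hab, isSquare_four_mul h2]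
  have hLHS : (∃ l', Passant l' ∧ Incid p l' ∧ Incid e l') ↔
      ¬ IsSquare (Gf p.rep σ * Gf p.rep τ) := by
    rw [← hline hστ]
    constructor
    · rintro ⟨l', hl', hpl', hel'⟩
      have heq : l' = lineThrough p (xpt h2 σ τ) := by
        rw [← hex]; exact line_unique hpe hpl' hel'
      exact heq ▸ hl'
    · intro hpass
      refine ⟨lineThrough p (xpt h2 σ τ), hpass, incid_lineThrough_left (hpx hστ), ?_⟩
      rw [hex]
      exact incid_lineThrough_right (hpx hστ)
  have hcond : ∀ α : Option K, α ≠ υ →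
      ((∃ l', Passant l' ∧ Incid p l' ∧ Incid (meetPt l' (tl υ)) (tl α)) ↔
        ¬ IsSquare (Gf p.rep α * Gf p.rep υ)) := by
    intro α hαυ
    rw [← hline hαυ]
    have htlαυ : tl α ≠ tl υ := fun h => hαυ (tl_injective h2 h)
    constructor
    · rintro ⟨l', hl', hpl', hml'⟩
      have hne : l' ≠ tl υ := passant_ne_tangent hl' (tangent_tl h2 υ)
      have hmx : meetPt l' (tl υ) = xpt h2 α υ :=
        point_unique htlαυ hml' (incid_meetPt_right hne)
          (incid_xpt_left h2 hαυ) (incid_xpt_right h2 hαυ)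
      have heq : l' = lineThrough p (xpt h2 α υ) :=
        line_unique (hpx hαυ) hpl' (hmx ▸ incid_meetPt_left hne)
      exact heq ▸ hl'
    · intro hpass
      refine ⟨lineThrough p (xpt h2 α υ), hpass, incid_lineThrough_left (hpx hαυ), ?_⟩
      have hne : lineThrough p (xpt h2 α υ) ≠ tl υ :=
        passant_ne_tangent hpass (tangent_tl h2 υ)
      have hmeet_eq : meetPt (lineThrough p (xpt h2 α υ)) (tl υ) = xpt h2 α υ :=
        point_unique hne (incid_meetPt_left hne) (incid_meetPt_right hne)
          (incid_lineThrough_right (hpx hαυ)) (incid_xpt_right h2 hαυ)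
      rw [hmeet_eq]
      exact incid_xpt_left h2 hαυ
  set f : Pt K → ZMod 2 := fun t =>
    if (Tangent t ∧ t ≠ tl υ ∧
          ∃ l', Passant l' ∧ Incid p l' ∧ Incid (meetPt l' (tl υ)) t) ∧ Incid e t
    then (1 : ZMod 2) else 0 with hf
  have hfval : ∀ α : Option K, Incid e (tl α) →
      f (tl α) = if ¬ IsSquare (Gf p.rep α * Gf p.rep υ) then (1 : ZMod 2) else 0 := by
    intro α heα
    by_cases hαυ : α = υ
    · subst hαυ
      have hsq : IsSquare (Gf p.rep α * Gf p.rep α) := ⟨Gf p.rep α, rfl⟩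
      simp only [hf]
      rw [if_neg (fun h => h.1.2.1 rfl), if_neg (not_not_intro hsq)]
    · have htlne : tl α ≠ tl υ := fun h => hαυ (tl_injective h2 h)
      have hiff : ((Tangent (tl α) ∧ tl α ≠ tl υ ∧
            ∃ l', Passant l' ∧ Incid p l' ∧ Incid (meetPt l' (tl υ)) (tl α)) ∧ Incid e (tl α))
          ↔ ¬ IsSquare (Gf p.rep α * Gf p.rep υ) := by
        constructor
        · rintro ⟨⟨-, -, hex'⟩, -⟩
          exact (hcond α hαυ).1 hex'
        · intro hsq
          exact ⟨⟨tangent_tl h2 α, htlne, (hcond α hαυ).2 hsq⟩, heα⟩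
      simp only [hf]
      exact if_congr hiff rfl rfl
  have hvanish : ∀ t : Pt K, t ∉ ({tl σ, tl τ} : Finset (Pt K)) → f t = 0 := by
    intro t ht
    simp only [hf]
    rw [if_neg]
    rintro ⟨⟨htan, -, -⟩, het⟩
    obtain ⟨α, rfl⟩ := (tangent_iff_tl h2).1 htan
    rcases (hGe α).1 (incid_tl_iff.1 het) with rfl | rfl
    · exact ht (by simp)
    · exact ht (by simp)
  have hsum : ∑ t : Pt K, f t = f (tl σ) + f (tl τ) := by
    rw [← Finset.sum_pair htlστ]
    exact (Finset.sum_subset (Finset.subset_univ _) (fun x _ hx => hvanish x hx)).symm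
  rw [hsum, hfval σ heσ, hfval τ heτ, if_congr hLHS rfl rfl]
  exact parity_key (hpG σ) (hpG τ) (hpG υ)

end ConicCode
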